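/- arXiv:1310.5011 — 3 statements merged into one kernel-verified Lean document; each statement's English description precedes it below -/
import Mathlib

section
/- An equation s = t between terms over the meadow signature Σ_m = (0,1,−,+,·,⁻¹) holds in every formally real meadow if and only if it holds in every formally real cancellation meadow. -/
/-- A meadow: a commutative ring with a total inverse operation satisfying
`(x⁻¹)⁻¹ = x` and the restricted inverse law `x * (x * x⁻¹) = x`. -/
class Meadow (M : Type) extends CommRing M, Inv M where
  minv_inv : ∀ x : M, x⁻¹⁻¹ = x
  ril : ∀ x : M, x * (x * x⁻¹) = x

/-- The Inverse Law `IL`: a cancellation meadow is a meadow satisfying it. -/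
def InverseLaw (M : Type) [Meadow M] : Prop :=
  ∀ x : M, x ≠ 0 → x * x⁻¹ = 1

/-- Terms over the meadow signature `Σ_m = (0,1,−,+,·,⁻¹)` with variables in `ℕ`. -/
inductive MTerm : Type
  | var : ℕ → MTerm
  | zero : MTerm
  | one : MTerm
  | neg : MTerm → MTerm
  | add : MTerm → MTerm → MTerm
  | mul : MTerm → MTerm → MTerm
  | inv : MTerm → MTerm

def MTerm.eval {M : Type} [Zero M] [One M] [Neg M] [Add M] [Mul M] [Inv M]
    (ρ : ℕ → M) : MTerm → M
  | .var v => ρ v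
  | .zero => 0
  | .one => 1
  | .neg t => -(t.eval ρ)
  | .add s t => s.eval ρ + t.eval ρ
  | .mul s t => s.eval ρ * t.eval ρ
  | .inv t => (t.eval ρ)⁻¹

/-- A meadow is formally real if it satisfies every instance of the scheme
`EFR_n`: `0_{x₀²+⋯+xₙ²} · x₀ = 0`, where `0_u = 1 - u·u⁻¹`. -/
def FormallyReal (M : Type) [Meadow M] : Prop :=
  ∀ (n : ℕ) (x : Fin (n + 1) → M),
    (1 - (∑ i, x i ^ 2) * (∑ i, x i ^ 2)⁻¹) * x 0 = 0

/-
A meadow has no nonzero nilpotents (`x = x² x⁻¹`), so an equation holds in it as soon as it holds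
modulo every prime ideal `p`. Modulo `p` the element `x⁻¹` is forced to be the field inverse of
`x`, so `M ⧸ p` is a field, and with its field inverse it is a cancellation meadow onto which `M`
maps as a meadow. Formal reality, being equational, passes to this quotient.
-/

theorem eq_of_forall_mk_prime_eq {R : Type*} [CommRing R] [IsReduced R] {x y : R}
    (h : ∀ p : Ideal R, p.IsPrime → Ideal.Quotient.mk p x = Ideal.Quotient.mk p y) : x = y :=
  sub_eq_zero.1 (nilpotent_iff_mem_prime.2 fun p hp => Ideal.Quotient.eq.1 (h p hp)).eq_zero

theorem MTerm.eval_map {M N : Type} [CommRing M] [Inv M] [CommRing N] [Inv N] (φ : M →+* N)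
    (hφ : ∀ x, φ x⁻¹ = (φ x)⁻¹) (ρ : ℕ → M) (u : MTerm) : u.eval (φ ∘ ρ) = φ (u.eval ρ) := by
  induction u with
  | var v => rfl
  | zero => exact φ.map_zero.symm
  | one => exact φ.map_one.symm
  | neg t ih => simp only [MTerm.eval, ih, map_neg]
  | add s t ihs iht => simp only [MTerm.eval, ihs, iht, map_add]
  | mul s t ihs iht => simp only [MTerm.eval, ihs, iht, map_mul]
  | inv t ih => simp only [MTerm.eval, ih, hφ]

namespace Meadow

abbrev ofField (K : Type) [Field K] : Meadow K where
  minv_inv := inv_inv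
  ril x := by
    rcases eq_or_ne x 0 with rfl | hx
    · rw [zero_mul]
    · rw [mul_inv_cancel₀ hx, mul_one]

theorem inverseLaw_ofField (K : Type) [Field K] : @InverseLaw K (ofField K) :=
  fun _ hx => mul_inv_cancel₀ hx

variable {M : Type} [Meadow M]

theorem inv_mul_inv_mul_self (x : M) : x⁻¹ * (x⁻¹ * x) = x⁻¹ := by
  simpa only [minv_inv] using ril x⁻¹

instance : IsReduced M :=
  (isReduced_iff_pow_one_lt 2 one_lt_two).2 fun x hx => by
    rw [← ril x, ← mul_assoc, ← sq, hx, zero_mul]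

theorem map_inv_of_field {K : Type} [Field K] (φ : M →+* K) (x : M) : φ x⁻¹ = (φ x)⁻¹ := by
  rcases eq_or_ne (φ x) 0 with hx | hx
  · rw [hx, inv_zero, ← inv_mul_inv_mul_self x, map_mul, map_mul, hx, mul_zero, mul_zero]
  · have hril := congrArg φ (ril x)
    rw [map_mul, map_mul] at hril
    exact eq_inv_of_mul_eq_one_right (mul_left_cancel₀ hx (hril.trans (mul_one _).symm))

theorem isMaximal_of_isPrime (p : Ideal M) [p.IsPrime] : p.IsMaximal := by
  refine Ideal.Quotient.maximal_of_isField p ⟨exists_pair_ne _, mul_comm, fun {a} ha => ?_⟩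
  obtain ⟨x, rfl⟩ := Ideal.Quotient.mk_surjective a
  refine ⟨Ideal.Quotient.mk p x⁻¹, mul_left_cancel₀ ha ?_⟩
  rw [← map_mul, ← map_mul, ril, mul_one]

theorem formallyReal_of_surjective {N : Type} [Meadow N] (φ : M →+* N)
    (hφ : Function.Surjective φ) (hinv : ∀ x, φ x⁻¹ = (φ x)⁻¹) (h : FormallyReal M) :
    FormallyReal N := by
  intro n y
  choose x hx using fun i => hφ (y i)
  simpa only [map_mul, map_sub, map_one, map_sum, map_pow, map_zero, hinv, hx] using
    congrArg φ (h n x)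

end Meadow

/-- an equation over `Σ_m` holds in every formally real meadow
iff it holds in every formally real cancellation meadow. -/
theorem formallyReal_eq_iff_cancellation (s t : MTerm) :
    (∀ (M : Type) [Meadow M], FormallyReal M → ∀ ρ : ℕ → M, s.eval ρ = t.eval ρ) ↔
    (∀ (M : Type) [Meadow M], FormallyReal M → InverseLaw M →
      ∀ ρ : ℕ → M, s.eval ρ = t.eval ρ) := by
  refine ⟨fun H M _ hFR _ ρ => H M hFR ρ, fun H M _ hFR ρ => ?_⟩
  refine eq_of_forall_mk_prime_eq fun p _ => ?_
  have : p.IsMaximal := Meadow.isMaximal_of_isPrime p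
  let _ : Field (M ⧸ p) := Ideal.Quotient.field p
  let _ : Meadow (M ⧸ p) := Meadow.ofField _
  have hinv := Meadow.map_inv_of_field (Ideal.Quotient.mk p)
  rw [← MTerm.eval_map _ hinv, ← MTerm.eval_map _ hinv]
  exact H _ (Meadow.formallyReal_of_surjective _ Ideal.Quotient.mk_surjective hinv hFR)
    (Meadow.inverseLaw_ofField _) _
end

section
/- Let s and t be terms over the meadow signature Σ_m = (0,1,−,+,·,⁻¹) with free variables among {x₀,…,xₙ, y₀,…,yₙ}, let z₀,…,zₙ be fresh variables, and let s* and t* be obtained from s and t by substituting re(zⱼ) for xⱼ and im(zⱼ) for yⱼ (0 ≤ j ≤ n). If the equation s = t holds in every meadow satisfying all instances of the scheme (AEFR_n): 1_{1+x₀²+⋯+xₙ²} = 1, then the equation s* = t* holds in every model of Md + CC + SSAV. -/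
/-- A complex meadow (model of `Md + CC + SSAV`): a meadow with an imaginary unit
`i` and a conjugation `conj` satisfying the axioms `CC` and the scheme `SSAV`,
where `1_x = x·x⁻¹`. -/
structure IsComplexMeadow (M : Type) [Meadow M] (i : M) (conj : M → M) : Prop where
  cc0 : conj 0 = 0
  cc1 : conj 1 = 1
  cc2 : conj i = -i
  cc3 : ∀ x : M, conj (-x) = -conj x
  cc4 : ∀ x y : M, conj (x + y) = conj x + conj y
  cc5 : ∀ x y : M, conj (x * y) = conj x * conj y
  cc6 : ∀ x : M, conj x⁻¹ = (conj x)⁻¹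
  cc7 : ∀ x : M, conj (conj x) = x
  cc8 : i * i = -1
  cc9 : ∀ x : M, conj x * (conj x)⁻¹ = x * x⁻¹
  ssav : ∀ (n : ℕ) (x : Fin (n + 1) → M),
    (1 + ∑ j, x j * conj (x j)) * (1 + ∑ j, x j * conj (x j))⁻¹ = 1

/-- The real part `re(x) = (1/2)·(x + conj x)` in a complex meadow. -/
def cmRe {M : Type} [Meadow M] (conj : M → M) (x : M) : M :=
  (1 * (2 : M)⁻¹) * (x + conj x)

/-- The imaginary part `im(x) = −(i/2)·(x − conj x)` in a complex meadow. -/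
def cmIm {M : Type} [Meadow M] (i : M) (conj : M → M) (x : M) : M :=
  -(i * (2 : M)⁻¹) * (x - conj x)

/-- The alternative scheme `AEFR_n`: `1_{1+x₀²+⋯+xₙ²} = 1`, where `1_u = u·u⁻¹`. -/
def AEFR (M : Type) [Meadow M] : Prop :=
  ∀ (n : ℕ) (x : Fin (n + 1) → M),
    (1 + ∑ i, x i ^ 2) * (1 + ∑ i, x i ^ 2)⁻¹ = 1

/-- Terms over the meadow signature `Σ_m` with variables in `V`. -/
inductive MTermV (V : Type) : Type
  | var : V → MTermV V
  | zero : MTermV V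
  | one : MTermV V
  | neg : MTermV V → MTermV V
  | add : MTermV V → MTermV V → MTermV V
  | mul : MTermV V → MTermV V → MTermV V
  | inv : MTermV V → MTermV V

def MTermV.eval {V M : Type} [Zero M] [One M] [Neg M] [Add M] [Mul M] [Inv M]
    (ρ : V → M) : MTermV V → M
  | .var v => ρ v
  | .zero => 0
  | .one => 1
  | .neg t => -(t.eval ρ)
  | .add s t => s.eval ρ + t.eval ρ
  | .mul s t => s.eval ρ * t.eval ρ
  | .inv t => (t.eval ρ)⁻¹

/-- Terms over the complex meadow signature `(0,1,i,−,+,·,⁻¹,conj)` with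
variables in `V`. -/
inductive CTermV (V : Type) : Type
  | var : V → CTermV V
  | zero : CTermV V
  | one : CTermV V
  | iunit : CTermV V
  | neg : CTermV V → CTermV V
  | add : CTermV V → CTermV V → CTermV V
  | mul : CTermV V → CTermV V → CTermV V
  | inv : CTermV V → CTermV V
  | conj : CTermV V → CTermV V

def CTermV.eval {V M : Type} [Zero M] [One M] [Neg M] [Add M] [Mul M] [Inv M]
    (i : M) (cj : M → M) (ρ : V → M) : CTermV V → M
  | .var v => ρ v
  | .zero => 0
  | .one => 1
  | .iunit => i
  | .neg t => -(t.eval i cj ρ)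
  | .add s t => s.eval i cj ρ + t.eval i cj ρ
  | .mul s t => s.eval i cj ρ * t.eval i cj ρ
  | .inv t => (t.eval i cj ρ)⁻¹
  | .conj t => cj (t.eval i cj ρ)

/-- Interpret a meadow term as a complex meadow term, substituting the complex
meadow term `f v` for each variable `v`. -/
def MTermV.subst {V W : Type} (f : V → CTermV W) : MTermV V → CTermV W
  | .var v => f v
  | .zero => .zero
  | .one => .one
  | .neg t => .neg (t.subst f)
  | .add s t => .add (s.subst f) (t.subst f)
  | .mul s t => .mul (s.subst f) (t.subst f)
  | .inv t => .inv (t.subst f)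

/-- The term `re(c) = (1/2)·(c + conj c)`. -/
def reTerm {W : Type} (c : CTermV W) : CTermV W :=
  .mul (.mul .one (.inv (.add .one .one))) (.add c (.conj c))

/-- The term `im(c) = −(i/2)·(c − conj c)`. -/
def imTerm {W : Type} (c : CTermV W) : CTermV W :=
  .mul (.neg (.mul .iunit (.inv (.add .one .one)))) (.add c (.neg (.conj c)))

/-- The substitution sending `xⱼ ↦ re(zⱼ)` and `yⱼ ↦ im(zⱼ)`. -/
def reImSubst (n : ℕ) : (Fin (n + 1) ⊕ Fin (n + 1)) → CTermV (Fin (n + 1))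
  | .inl j => reTerm (.var j)
  | .inr j => imTerm (.var j)

/-! Every conjugation-fixed element `x` has `x · conj x = x²`, so the fixed points of a complex
meadow form a sub-meadow in which `SSAV` specialises to `AEFR`. Since `re(z)` and `im(z)` are
fixed by conjugation, `s*` and `t*` are evaluations of `s` and `t` in this sub-meadow, where
`s = t` holds by hypothesis. -/

theorem MTermV.eval_subst {V W M : Type} [Zero M] [One M] [Neg M] [Add M] [Mul M] [Inv M]
    (i : M) (cj : M → M) (f : V → CTermV W) (ρ : W → M) (u : MTermV V) :
    (u.subst f).eval i cj ρ = u.eval (fun v => (f v).eval i cj ρ) := by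
  induction u with
  | var v => rfl
  | zero => rfl
  | one => rfl
  | neg t ih => simp only [MTermV.subst, MTermV.eval, CTermV.eval, ih]
  | add s t ihs iht => simp only [MTermV.subst, MTermV.eval, CTermV.eval, ihs, iht]
  | mul s t ihs iht => simp only [MTermV.subst, MTermV.eval, CTermV.eval, ihs, iht]
  | inv t ih => simp only [MTermV.subst, MTermV.eval, CTermV.eval, ih]

theorem MTermV.eval_map {V A B : Type} [Meadow A] [Meadow B] (f : A →+* B)
    (map_inv : ∀ x, f x⁻¹ = (f x)⁻¹) (ρ : V → A) (u : MTermV V) :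
    f (u.eval ρ) = u.eval (f ∘ ρ) := by
  induction u with
  | var v => rfl
  | zero => exact map_zero f
  | one => exact map_one f
  | neg t ih => simp only [MTermV.eval, map_neg, ih]
  | add s t ihs iht => simp only [MTermV.eval, map_add, ihs, iht]
  | mul s t ihs iht => simp only [MTermV.eval, map_mul, ihs, iht]
  | inv t ih => simp only [MTermV.eval, map_inv, ih]

abbrev Subring.toMeadow {M : Type} [Meadow M] (S : Subring M)
    (inv_mem : ∀ x ∈ S, x⁻¹ ∈ S) : Meadow S where
  inv x := ⟨(x : M)⁻¹, inv_mem x x.2⟩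
  minv_inv x := Subtype.ext (Meadow.minv_inv (x : M))
  ril x := Subtype.ext (Meadow.ril (x : M))

theorem Subring.coe_inv_toMeadow {M : Type} [Meadow M] (S : Subring M)
    (inv_mem : ∀ x ∈ S, x⁻¹ ∈ S) (x : S) :
    letI := S.toMeadow inv_mem
    ((x⁻¹ : S) : M) = (x : M)⁻¹ := rfl

theorem CTermV.eval_reTerm {W M : Type} [Meadow M] (i : M) (cj : M → M) (ρ : W → M)
    (c : CTermV W) : (reTerm c).eval i cj ρ = cmRe cj (c.eval i cj ρ) := by
  simp only [reTerm, CTermV.eval, cmRe, one_add_one_eq_two]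

theorem CTermV.eval_imTerm {W M : Type} [Meadow M] (i : M) (cj : M → M) (ρ : W → M)
    (c : CTermV W) : (imTerm c).eval i cj ρ = cmIm i cj (c.eval i cj ρ) := by
  simp only [imTerm, CTermV.eval, cmIm, one_add_one_eq_two, sub_eq_add_neg]

namespace IsComplexMeadow

variable {M : Type} [Meadow M] {i : M} {cj : M → M} (h : IsComplexMeadow M i cj)
include h

def conjHom : M →+* M where
  toFun := cj
  map_one' := h.cc1
  map_mul' := h.cc5
  map_zero' := h.cc0
  map_add' := h.cc4

def fixedSubring : Subring M :=
  h.conjHom.eqLocus (RingHom.id M)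

theorem mem_fixedSubring {x : M} : x ∈ h.fixedSubring ↔ cj x = x := Iff.rfl

theorem inv_mem_fixedSubring (x : M) (hx : x ∈ h.fixedSubring) : x⁻¹ ∈ h.fixedSubring := by
  rw [mem_fixedSubring] at hx ⊢
  rw [h.cc6, hx]

abbrev fixedMeadow : Meadow h.fixedSubring :=
  h.fixedSubring.toMeadow h.inv_mem_fixedSubring

theorem aefr_fixedSubring :
    letI := h.fixedMeadow
    AEFR h.fixedSubring := by
  let := h.fixedMeadow
  intro m x
  apply Subtype.ext
  have sq_eq : ∀ j, (x j : M) ^ 2 = x j * cj (x j) := fun j => by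
    rw [h.mem_fixedSubring.1 (x j).2, sq]
  simpa only [Subring.coe_mul, Subring.coe_inv_toMeadow, Subring.coe_add, Subring.coe_one,
    AddSubmonoidClass.coe_finsetSum, SubmonoidClass.coe_pow, sq_eq]
    using h.ssav m fun j => (x j : M)

theorem conj_two : cj 2 = 2 := by
  rw [← one_add_one_eq_two, h.cc4, h.cc1]

theorem cmRe_mem_fixedSubring (x : M) : cmRe cj x ∈ h.fixedSubring := by
  rw [mem_fixedSubring, cmRe, h.cc5, h.cc5, h.cc1, h.cc6, h.conj_two, h.cc4, h.cc7]
  ring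

theorem cmIm_mem_fixedSubring (x : M) : cmIm i cj x ∈ h.fixedSubring := by
  rw [mem_fixedSubring, cmIm, h.cc5, h.cc3, h.cc5, h.cc2, h.cc6, h.conj_two,
    sub_eq_add_neg, h.cc4, h.cc3, h.cc7]
  ring

theorem eval_reImSubst_mem_fixedSubring {n : ℕ} (ρ : Fin (n + 1) → M)
    (v : Fin (n + 1) ⊕ Fin (n + 1)) : (reImSubst n v).eval i cj ρ ∈ h.fixedSubring := by
  cases v with
  | inl j => rw [reImSubst, CTermV.eval_reTerm]; exact h.cmRe_mem_fixedSubring _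
  | inr j => rw [reImSubst, CTermV.eval_imTerm]; exact h.cmIm_mem_fixedSubring _

end IsComplexMeadow

/-- if `s = t` (with variables among `x₀,…,xₙ,y₀,…,yₙ`) holds in
every meadow satisfying `AEFR`, then `s* = t*`, obtained by substituting `re(zⱼ)`
for `xⱼ` and `im(zⱼ)` for `yⱼ`, holds in every model of `Md + CC + SSAV`. -/
theorem aefr_eq_transfers_to_complexMeadow (n : ℕ)
    (s t : MTermV (Fin (n + 1) ⊕ Fin (n + 1)))
    (h : ∀ (M : Type) [Meadow M], AEFR M →
      ∀ ρ : Fin (n + 1) ⊕ Fin (n + 1) → M, s.eval ρ = t.eval ρ) :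
    ∀ (M : Type) [Meadow M] (i : M) (cj : M → M), IsComplexMeadow M i cj →
      ∀ ρ : Fin (n + 1) → M,
        (s.subst (reImSubst n)).eval i cj ρ = (t.subst (reImSubst n)).eval i cj ρ := by
  intro M _ i cj hc ρ
  let := hc.fixedMeadow
  let ρR : Fin (n + 1) ⊕ Fin (n + 1) → hc.fixedSubring := fun v =>
    ⟨(reImSubst n v).eval i cj ρ, hc.eval_reImSubst_mem_fixedSubring ρ v⟩
  have eval_coe (u : MTermV (Fin (n + 1) ⊕ Fin (n + 1))) :
      ((u.eval ρR : hc.fixedSubring) : M) = (u.subst (reImSubst n)).eval i cj ρ := by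
    rw [MTermV.eval_subst]
    exact MTermV.eval_map hc.fixedSubring.subtype (fun _ => rfl) ρR u
  rw [← eval_coe, ← eval_coe, h _ hc.aefr_fixedSubring ρR]
end

section
/- In every signed meadow, for every n and all elements x₀, …, xₙ: 0_{x₀²+⋯+xₙ²}·1_{x₀·⋯·xₙ} = 0, i.e., (1 − (x₀²+⋯+xₙ²)·(x₀²+⋯+xₙ²)⁻¹)·((x₀·⋯·xₙ)·(x₀·⋯·xₙ)⁻¹) = 0. -/
/-- The axioms `Signs` for a sign operation on a meadow, where `1_x = x·x⁻¹` and
`0_x = 1 - x·x⁻¹`. -/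
structure IsSign (M : Type) [Meadow M] (sg : M → M) : Prop where
  s1 : ∀ x : M, sg (x * x⁻¹) = x * x⁻¹
  s2 : ∀ x : M, sg (1 - x * x⁻¹) = 1 - x * x⁻¹
  s3 : sg (-1) = -1
  s4 : ∀ x : M, sg x⁻¹ = sg x
  s5 : ∀ x y : M, sg (x * y) = sg x * sg y
  s6 : ∀ x y : M,
    (1 - (sg x - sg y) * (sg x - sg y)⁻¹) * (sg (x + y) - sg x) = 0

/-!
Write `1_x = x·x⁻¹` and `0_x = 1 - 1_x`; these are complementary idempotents. For elements `u`, `v`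
with `s(u) = 1_u` and `s(v) = 1_v`, the sign axioms pin down `s(u + v)` on each of the pieces cut
out by `1_u` and `1_v`, giving `s(u + v) = 1_u + 1_v - 1_u·1_v`; squaring, `1_{u+v}` is the same
idempotent, so `s(u + v) = 1_{u+v}` and `0_{u+v} = 0_u·0_v`. Since `s(x²) = 1_x = 1_{x²}`, induction
gives `0_{x₀²+⋯+xₙ²} = ∏ 0_{xᵢ}`, while `1_{x₀⋯xₙ} = ∏ 1_{xᵢ}` because inversion is
multiplicative. The product of the two contains the factor `0_{x₀}·1_{x₀} = 0`.
-/

namespace Meadow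

variable {M : Type} [Meadow M]

theorem mul_inv_mul_self (x : M) : x * x⁻¹ * x = x := by
  linear_combination ril x

theorem inv_mul_self_mul_inv (x : M) : x⁻¹ * x * x⁻¹ = x⁻¹ := by
  have h := ril x⁻¹
  rw [minv_inv] at h
  linear_combination h

theorem mul_inv_idem (x : M) : x * x⁻¹ * (x * x⁻¹) = x * x⁻¹ := by
  linear_combination x⁻¹ * ril x

theorem one_sub_mul_inv_mul_mul_inv (x : M) : (1 - x * x⁻¹) * (x * x⁻¹) = 0 := by
  linear_combination -mul_inv_idem x

theorem mul_one_sub_mul_inv (x : M) : x * (1 - x * x⁻¹) = 0 := by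
  linear_combination -ril x

theorem inv_eq_of_mul_mul {x y : M} (hxy : x * y * x = x) (hyx : y * x * y = y) : x⁻¹ = y := by
  have hone : x * x⁻¹ = x * y := by
    calc x * x⁻¹ = x * y * x * x⁻¹ := by rw [hxy]
      _ = x * x⁻¹ * x * y := by ring
      _ = x * y := by rw [mul_inv_mul_self]
  calc x⁻¹ = x⁻¹ * (x * x⁻¹) := by linear_combination -inv_mul_self_mul_inv x
    _ = x⁻¹ * (x * y) := by rw [hone]
    _ = x * x⁻¹ * y := by ring
    _ = y := by rw [hone]; linear_combination hyx

protected theorem inv_zero : (0 : M)⁻¹ = 0 :=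
  inv_eq_of_mul_mul (by ring) (by ring)

protected theorem inv_one : (1 : M)⁻¹ = 1 :=
  inv_eq_of_mul_mul (by ring) (by ring)

protected theorem mul_inv (x y : M) : (x * y)⁻¹ = x⁻¹ * y⁻¹ := by
  apply inv_eq_of_mul_mul
  · linear_combination y * (y * y⁻¹) * ril x + x * ril y
  · linear_combination y⁻¹ * (y * y⁻¹) * inv_mul_self_mul_inv x + x⁻¹ * inv_mul_self_mul_inv y

def invMonoidHom : M →* M where
  toFun x := x⁻¹
  map_one' := Meadow.inv_one
  map_mul' := Meadow.mul_inv

theorem sq_mul_inv_sq (x : M) : x ^ 2 * (x ^ 2)⁻¹ = x * x⁻¹ := by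
  rw [sq, Meadow.mul_inv]
  linear_combination mul_inv_idem x

theorem prod_mul_prod_inv {ι : Type*} (s : Finset ι) (x : ι → M) :
    (∏ i ∈ s, x i) * (∏ i ∈ s, x i)⁻¹ = ∏ i ∈ s, x i * (x i)⁻¹ := by
  rw [Finset.prod_mul_distrib]
  exact congrArg _ (map_prod (invMonoidHom : M →* M) x s)

end Meadow

namespace IsSign

open Meadow

variable {M : Type} [Meadow M] {sg : M → M}

theorem map_zero (hs : IsSign M sg) : sg 0 = 0 := by
  simpa [Meadow.inv_zero] using hs.s1 0

theorem map_mul_self (hs : IsSign M sg) (x : M) : sg x * sg x = x * x⁻¹ := by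
  rw [← hs.s1 x, hs.s5, hs.s4]

theorem map_sq (hs : IsSign M sg) (x : M) : sg (x ^ 2) = x ^ 2 * (x ^ 2)⁻¹ := by
  rw [sq_mul_inv_sq, sq, hs.s5, map_mul_self hs]

theorem map_add_mul_one_sub_mul_inv (hs : IsSign M sg) (u v : M) :
    sg (u + v) * (1 - v * v⁻¹) = sg u * (1 - v * v⁻¹) := by
  have hsupp : (u + v) * (1 - v * v⁻¹) = u * (1 - v * v⁻¹) := by
    linear_combination mul_one_sub_mul_inv v
  rw [← hs.s2, ← hs.s5, ← hs.s5, hsupp]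

theorem map_add_of_map_eq_mul_inv (hs : IsSign M sg) {u v : M}
    (hu : sg u = u * u⁻¹) (hv : sg v = v * v⁻¹) :
    sg (u + v) = u * u⁻¹ + v * v⁻¹ - u * u⁻¹ * (v * v⁻¹) := by
  set a := u * u⁻¹
  set b := v * v⁻¹
  have ha : a * a = a := mul_inv_idem u
  have hb : b * b = b := mul_inv_idem v
  have hoffv : sg (u + v) * (1 - b) = a * (1 - b) := by
    rw [map_add_mul_one_sub_mul_inv hs, hu]
  have hoffu : sg (u + v) * (1 - a) = b * (1 - a) := by
    rw [add_comm, map_add_mul_one_sub_mul_inv hs, hv]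
  -- On the common support of `u` and `v` the pseudo-zero of `a - b` is `1`, so `S6` applies there.
  have hs6 : (1 - (a - b) * (a - b)⁻¹) * (sg (u + v) - a) = 0 := by
    simpa only [hu, hv] using hs.s6 u v
  have hsupp : (a - b) * (a - b)⁻¹ * (a * b) = 0 := by
    linear_combination (a - b)⁻¹ * (b * ha - a * hb)
  have hboth : sg (u + v) * (a * b) = a * b := by
    linear_combination a * b * hs6 + (sg (u + v) - a) * hsupp + b * ha
  linear_combination hoffv + b * hoffu + hboth + (1 - a) * hb

theorem mul_inv_add_of_map_eq_mul_inv (hs : IsSign M sg) {u v : M}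
    (hu : sg u = u * u⁻¹) (hv : sg v = v * v⁻¹) :
    (u + v) * (u + v)⁻¹ = u * u⁻¹ + v * v⁻¹ - u * u⁻¹ * (v * v⁻¹) := by
  rw [← map_mul_self hs, map_add_of_map_eq_mul_inv hs hu hv]
  linear_combination (1 - v * v⁻¹) ^ 2 * mul_inv_idem u + (1 - u * u⁻¹) * mul_inv_idem v

theorem map_sum_sq {ι : Type*} (hs : IsSign M sg) (s : Finset ι) (x : ι → M) :
    sg (∑ i ∈ s, x i ^ 2) = (∑ i ∈ s, x i ^ 2) * (∑ i ∈ s, x i ^ 2)⁻¹ := by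
  classical
  induction s using Finset.induction_on with
  | empty => simp [map_zero hs, Meadow.inv_zero]
  | insert i s hi ih =>
    rw [Finset.sum_insert hi, map_add_of_map_eq_mul_inv hs (map_sq hs _) ih,
      mul_inv_add_of_map_eq_mul_inv hs (map_sq hs _) ih]

theorem one_sub_sum_sq_mul_inv {ι : Type*} (hs : IsSign M sg) (s : Finset ι) (x : ι → M) :
    1 - (∑ i ∈ s, x i ^ 2) * (∑ i ∈ s, x i ^ 2)⁻¹ = ∏ i ∈ s, (1 - x i * (x i)⁻¹) := by
  classical
  induction s using Finset.induction_on with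
  | empty => simp [Meadow.inv_zero]
  | insert i s hi ih =>
    rw [Finset.sum_insert hi, Finset.prod_insert hi, ← ih,
      mul_inv_add_of_map_eq_mul_inv hs (map_sq hs _) (map_sum_sq hs s x), sq_mul_inv_sq]
    ring

end IsSign

/-- in every signed meadow, `0_{x₀²+⋯+xₙ²} · 1_{x₀·⋯·xₙ} = 0`. -/
theorem signedMeadow_pseudoZero_sumSq_mul_pseudoOne_prod (M : Type) [Meadow M]
    (sg : M → M) (hs : IsSign M sg) (n : ℕ) (x : Fin (n + 1) → M) :
    (1 - (∑ i, x i ^ 2) * (∑ i, x i ^ 2)⁻¹) * ((∏ i, x i) * (∏ i, x i)⁻¹) = 0 := by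
  rw [hs.one_sub_sum_sq_mul_inv, Meadow.prod_mul_prod_inv, ← Finset.prod_mul_distrib]
  exact Finset.prod_eq_zero (Finset.mem_univ 0) (Meadow.one_sub_mul_inv_mul_mul_inv (x 0))
end
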